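/- Let p be a prime, d = (ℓ+1)/4 with ℓ ≡ 3 (mod 4), and let C ⊆ ((ℤ/pℤ)²)^n be a set of codewords. For u = (u₁,...,uₙ) ∈ (ℤ²)^n reducing componentwise mod p into C, write ‖u‖ = Σᵢ Q_d(aᵢ,bᵢ) where uᵢ = (aᵢ,bᵢ). Then the number of u in the preimage of C with ‖u‖ = k and all bᵢ ≡ 0 reducing to a fixed codeword does not depend on d; consequently, for two values d < d', the counts #{u : ‖u‖ = k} with respect to d and d' coincide for all k < d. -/

import Mathlib

/-- `Q_d(x, y) = x² + xy + dy²` summed over the components of `u ∈ (ℤ²)^n`. -/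
def normQ (d : ℤ) {n : ℕ} (u : Fin n → ℤ × ℤ) : ℤ :=
  ∑ i, ((u i).1 ^ 2 + (u i).1 * (u i).2 + d * (u i).2 ^ 2)

/-- Componentwise reduction mod `p`. -/
def redQ (p : ℕ) {n : ℕ} (u : Fin n → ℤ × ℤ) : Fin n → ZMod p × ZMod p :=
  fun i => (((u i).1 : ZMod p), ((u i).2 : ZMod p))

/-! For `d > 0`, `4 Q_d(a, b) = (2a + b)² + (4d - 1) b²`, so `Q_d` is nonnegative and a vector
with some `bᵢ ≠ 0` has norm at least `d`. Below `d` only vectors with all `bᵢ = 0` occur, and on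
those `Q_d(a, 0) = a²` does not see `d`. -/

lemma quadForm_nonneg {d : ℤ} (hd : 0 < d) (a b : ℤ) : 0 ≤ a ^ 2 + a * b + d * b ^ 2 := by
  nlinarith [sq_nonneg (2 * a + b), sq_nonneg b]

lemma le_quadForm {d : ℤ} (hd : 0 < d) (a : ℤ) {b : ℤ} (hb : b ≠ 0) :
    d ≤ a ^ 2 + a * b + d * b ^ 2 := by
  have hb2 : 1 ≤ b ^ 2 := by have := sq_pos_of_ne_zero hb; lia
  nlinarith [sq_nonneg (2 * a + b)]

lemma normQ_eq_of_forall_snd_eq_zero (d d' : ℤ) {n : ℕ} {u : Fin n → ℤ × ℤ}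
    (h : ∀ i, (u i).2 = 0) : normQ d u = normQ d' u :=
  Finset.sum_congr rfl fun i _ => by simp [h i]

lemma snd_eq_zero_of_normQ_lt {d : ℤ} (hd : 0 < d) {n : ℕ} {u : Fin n → ℤ × ℤ}
    (h : normQ d u < d) (i : Fin n) : (u i).2 = 0 := by
  by_contra hb
  have hterm : (u i).1 ^ 2 + (u i).1 * (u i).2 + d * (u i).2 ^ 2 ≤ normQ d u :=
    Finset.single_le_sum (fun j _ => quadForm_nonneg hd _ _) (Finset.mem_univ i)
  linarith [le_quadForm hd (u i).1 hb]

lemma normQ_eq_iff_of_lt {d d' k : ℤ} (hd : 0 < d) (hd' : 0 < d') (hk : k < d) (hk' : k < d')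
    {n : ℕ} (u : Fin n → ℤ × ℤ) : normQ d u = k ↔ normQ d' u = k := by
  constructor
  · intro h
    rwa [← normQ_eq_of_forall_snd_eq_zero d d' (snd_eq_zero_of_normQ_lt hd (h ▸ hk))]
  · intro h
    rwa [normQ_eq_of_forall_snd_eq_zero d d' (snd_eq_zero_of_normQ_lt hd' (h ▸ hk'))]

theorem stmt_18_general (p : ℕ) (n : ℕ)
    (C : Set (Fin n → ZMod p × ZMod p)) :
    -- the count over vectors with all bᵢ = 0 reducing to a fixed codeword
    -- does not depend on d
    (∀ d d' : ℤ, ∀ c ∈ C, ∀ k : ℤ,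
      Nat.card {u : Fin n → ℤ × ℤ //
          redQ p u = c ∧ (∀ i, (u i).2 = 0) ∧ normQ d u = k} =
        Nat.card {u : Fin n → ℤ × ℤ //
          redQ p u = c ∧ (∀ i, (u i).2 = 0) ∧ normQ d' u = k}) ∧
    -- consequently, for d < d' the theta coefficients agree below d
    (∀ d d' : ℤ, 0 < d → d < d' → ∀ k : ℤ, k < d →
      Nat.card {u : Fin n → ℤ × ℤ // redQ p u ∈ C ∧ normQ d u = k} =
        Nat.card {u : Fin n → ℤ × ℤ // redQ p u ∈ C ∧ normQ d' u = k}) := by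
  refine ⟨fun d d' c _ k => ?_, fun d d' hd hdd' k hk => ?_⟩
  · refine Nat.card_congr (Equiv.subtypeEquivRight fun u => ?_)
    refine and_congr_right fun _ => and_congr_right fun hsnd => ?_
    rw [normQ_eq_of_forall_snd_eq_zero d d' hsnd]
  · refine Nat.card_congr (Equiv.subtypeEquivRight fun u => ?_)
    exact and_congr_right fun _ => normQ_eq_iff_of_lt hd (hd.trans hdd') hk (hk.trans hdd') u

theorem stmt_18 (p : ℕ) (hp : p.Prime) (n : ℕ)
    (C : Set (Fin n → ZMod p × ZMod p)) :
    -- the count over vectors with all bᵢ = 0 reducing to a fixed codeword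
    -- does not depend on d
    (∀ d d' : ℤ, ∀ c ∈ C, ∀ k : ℤ,
      Nat.card {u : Fin n → ℤ × ℤ //
          redQ p u = c ∧ (∀ i, (u i).2 = 0) ∧ normQ d u = k} =
        Nat.card {u : Fin n → ℤ × ℤ //
          redQ p u = c ∧ (∀ i, (u i).2 = 0) ∧ normQ d' u = k}) ∧
    -- consequently, for d < d' the theta coefficients agree below d
    (∀ d d' : ℤ, 0 < d → d < d' → ∀ k : ℤ, k < d →
      Nat.card {u : Fin n → ℤ × ℤ // redQ p u ∈ C ∧ normQ d u = k} =
        Nat.card {u : Fin n → ℤ × ℤ // redQ p u ∈ C ∧ normQ d' u = k}) :=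
  stmt_18_general p n C
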